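/- arXiv:2008.06878 — 3 statements merged into one kernel-verified Lean document; each statement's English description precedes it below -/
import Mathlib

section
/- If ε is an infinitesimal element of the field of Hahn series ℝ((Γ)) (i.e., ε ≺ 1), then the geometric series Σ_{n∈ℕ} (-1)^n ε^n is summable (the family has pointwise finite and well-ordered combined support) and its sum equals the multiplicative inverse of 1 + ε. -/
open HahnSeries

theorem HahnSeries.SummableFamily.one_add_self_mul_hsum_powers_neg {Γ R : Type*}
    [AddCommMonoid Γ] [LinearOrder Γ] [IsOrderedCancelAddMonoid Γ] [CommRing R] {x : R⟦Γ⟧}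
    (hx : 0 < x.orderTop) : (1 + x) * (SummableFamily.powers (-x)).hsum = 1 := by
  rw [← sub_neg_eq_add]
  exact SummableFamily.one_sub_self_mul_hsum_powers (by rwa [orderTop_neg])

variable {Γ : Type*} [AddCommGroup Γ] [LinearOrder Γ] [IsOrderedAddMonoid Γ]

theorem geometric_series_inverse_general (ε : HahnSeries Γ ℝ) (hord : 0 < ε.order) :
    ∃ S : SummableFamily Γ ℝ ℕ,
      (∀ n : ℕ, S n = (-1 : ℝ) ^ n • ε ^ n) ∧ S.hsum = (1 + ε)⁻¹ := by
  have hεtop : 0 < ε.orderTop := zero_lt_orderTop_of_order hord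
  refine ⟨SummableFamily.powers (-ε), fun n => ?_, ?_⟩
  · rw [SummableFamily.powers_of_orderTop_pos (by rwa [orderTop_neg]), ← neg_one_smul ℝ ε,
      smul_pow]
  · exact (inv_eq_of_mul_eq_one_right
      (SummableFamily.one_add_self_mul_hsum_powers_neg hεtop)).symm

/-- For an infinitesimal Hahn series `ε` (nonzero with strictly positive order), the
geometric series `Σ (-1)^n ε^n` is summable and its sum is the inverse of `1 + ε`. -/
theorem geometric_series_inverse (ε : HahnSeries Γ ℝ) (hε : ε ≠ 0) (hord : 0 < ε.order) :
    ∃ S : SummableFamily Γ ℝ ℕ,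
      (∀ n : ℕ, S n = (-1 : ℝ) ^ n • ε ^ n) ∧ S.hsum = (1 + ε)⁻¹ :=
  geometric_series_inverse_general ε hord
end

section
/- Every real closed field admits a group of monomials: there is a multiplicative subgroup M of the positive elements such that each nonzero element is Archimedean-equivalent to exactly one element of M (equivalently, the natural valuation admits a section on the value group). -/
/-!
The positive elements of `K` form an abelian group `G`, and `ArchimedeanClass.mk` restricts to a
homomorphism on `G` whose kernel `U` consists of the elements `≍ 1`. In a real closed field every
element of `G` has `n`-th roots, and `n`-th roots of elements of `U` lie in `U` because the value
group is torsion-free. A divisible abelian group is an injective `ℤ`-module (Baer's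
criterion), so `U` is a direct factor of `G`, and a complement of `U` meets every coset of `U`,
i.e. every Archimedean class, exactly once.
-/

/-- `f ⪯ g`: `f` is dominated by `g`. -/
def Dom {K : Type*} [Field K] [LinearOrder K] [IsStrictOrderedRing K] (f g : K) : Prop :=
  ∃ n : ℕ, |f| ≤ n * |g|

/-- `f ≍ g`: `f` and `g` are in the same Archimedean class. -/
def Asymp {K : Type*} [Field K] [LinearOrder K] [IsStrictOrderedRing K] (f g : K) : Prop :=
  Dom f g ∧ Dom g f

open ArchimedeanClass

theorem Subgroup.exists_retraction_of_rootableBy {G : Type*} [CommGroup G] (U : Subgroup G)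
    [RootableBy U ℕ] : ∃ ρ : G →* U, ∀ u : U, ρ u = u := by
  let _ : RootableBy U ℤ := Group.rootableByIntOfRootableByNat U
  let _ : DivisibleBy (Additive U) ℤ :=
    ⟨fun a n ↦ .ofMul (RootableBy.root a.toMul n), fun a ↦ RootableBy.root_zero a.toMul,
      fun a hn ↦ RootableBy.root_cancel a.toMul hn⟩
  obtain ⟨ρ, hρ⟩ := (Module.Baer.of_divisible (Additive U)).extension_property_addMonoidHom
    (MonoidHom.toAdditive U.subtype) U.subtype_injective (AddMonoidHom.id _)
  exact ⟨MonoidHom.toAdditive.symm ρ, fun u ↦ DFunLike.congr_fun hρ (.ofMul u)⟩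

theorem Subgroup.exists_isComplement'_of_rootableBy {G : Type*} [CommGroup G] (U : Subgroup G)
    [RootableBy U ℕ] : ∃ M : Subgroup G, U.IsComplement' M := by
  obtain ⟨ρ, hρ⟩ := U.exists_retraction_of_rootableBy
  refine ⟨ρ.ker, isComplement'_of_disjoint_and_mul_eq_univ ?_ ?_⟩
  · rw [disjoint_def]
    intro x hxU hxρ
    exact congrArg Subtype.val ((hρ ⟨x, hxU⟩).symm.trans hxρ)
  · refine Set.eq_univ_of_forall fun g ↦
      Set.mem_mul.2 ⟨ρ g, (ρ g).2, (ρ g)⁻¹ * g, ?_, mul_inv_cancel_left _ _⟩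
    simp [MonoidHom.mem_ker, hρ]

theorem MonoidHom.existsUnique_eq_map_of_isComplement' {G H : Type*} [Group G] [MulOneClass H]
    (φ : G →* H) {M : Subgroup G} (hM : M.IsComplement' φ.ker) (g : G) :
    ∃! m : M, φ g = φ m := by
  simp only [φ.eq_iff, ← SetLike.mem_coe]
  exact Subgroup.isComplement_iff_existsUnique_inv_mul_mem.mp hM g

section OrderedField

variable {K : Type*} [Field K] [LinearOrder K] [IsStrictOrderedRing K]

theorem asymp_iff_mk_eq {f g : K} : Asymp f g ↔ mk f = mk g := by
  simp only [Asymp, Dom, mk_eq_mk, nsmul_eq_mul]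
  exact and_comm

theorem ArchimedeanClass.mk_eq_zero_of_mk_pow_eq_zero {x : K} (hx : 0 < x) {n : ℕ} (hn : n ≠ 0)
    (h : mk (x ^ n) = 0) : mk x = 0 := by
  wlog hx1 : 1 ≤ x generalizing x
  · have hx1' : 1 ≤ x⁻¹ := (one_le_inv₀ hx).2 (not_le.1 hx1).le
    simpa using this (inv_pos.2 hx) (by rw [inv_pow, mk_inv, h, neg_zero]) hx1'
  have h1 : mk x ≤ 0 := mk_one (R := K) ▸ mk_antitoneOn zero_le_one (zero_le_one.trans hx1) hx1
  have h2 : mk (x ^ n) ≤ mk x :=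
    mk_antitoneOn (zero_le_one.trans hx1) (pow_pos hx n).le (le_self_pow₀ hx1 hn)
  exact le_antisymm h1 (h ▸ h2)

variable (K) in
@[simps]
def ArchimedeanClass.posMk : {x : K // 0 < x} →* Multiplicative (ArchimedeanClass K) where
  toFun x := .ofAdd (mk (x : K))
  map_one' := by simp
  map_mul' x y := by simp

instance [RootableBy {x : K // 0 < x} ℕ] : RootableBy (posMk K).ker ℕ where
  root u n := ⟨RootableBy.root (u : {x : K // 0 < x}) n, by
    rcases eq_or_ne n 0 with rfl | hn
    · rw [RootableBy.root_zero]
      exact one_mem _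
    have hu := u.2
    rw [MonoidHom.mem_ker, posMk_apply, ofAdd_eq_one] at hu ⊢
    refine mk_eq_zero_of_mk_pow_eq_zero (RootableBy.root (u : {x : K // 0 < x}) n).2 hn ?_
    rw [← hu, ← Positive.val_pow, RootableBy.root_cancel _ hn]⟩
  root_zero u := Subtype.ext (RootableBy.root_zero _)
  root_cancel u hn := Subtype.ext (RootableBy.root_cancel _ hn)

theorem exists_pos_pow_eq (hsq : ∀ x : K, 0 < x → ∃ y : K, y ^ 2 = x)
    (hodd : ∀ p : Polynomial K, Odd p.natDegree → ∃ x : K, p.eval x = 0)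
    {n : ℕ} (hn : n ≠ 0) {x : K} (hx : 0 < x) : ∃ r, 0 < r ∧ r ^ n = x := by
  induction n using Nat.strong_induction_on generalizing x with
  | _ n ih =>
  rcases n.even_or_odd with ⟨m, rfl⟩ | hn_odd
  · obtain ⟨s, hs, rfl⟩ := ih m (by omega) (by omega) hx
    obtain ⟨y, rfl⟩ := hsq s hs
    refine ⟨|y|, abs_pos.2 (by rintro rfl; simp at hs), ?_⟩
    rw [← two_mul, pow_mul, sq_abs]
  · obtain ⟨r, hr⟩ := hodd (Polynomial.X ^ n - Polynomial.C x)
      (by rwa [Polynomial.natDegree_X_pow_sub_C])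
    have hrx : r ^ n = x := by simpa [sub_eq_zero] using hr
    exact ⟨r, (hn_odd.pow_pos_iff).1 (hrx ▸ hx), hrx⟩

theorem surjective_pow_pos (hsq : ∀ x : K, 0 < x → ∃ y : K, y ^ 2 = x)
    (hodd : ∀ p : Polynomial K, Odd p.natDegree → ∃ x : K, p.eval x = 0)
    {n : ℕ} (hn : n ≠ 0) : Function.Surjective fun x : {x : K // 0 < x} ↦ x ^ n := by
  intro x
  obtain ⟨r, hr, hrx⟩ := exists_pos_pow_eq hsq hodd hn x.2
  exact ⟨⟨r, hr⟩, Subtype.ext hrx⟩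

end OrderedField

/-- Every real closed field (every positive element has a square root and every
polynomial of odd degree has a root) admits a group of monomials: a multiplicative
subgroup of the positive elements meeting each Archimedean class of `K^{≠0}` exactly
once. -/
theorem real_closed_field_has_monomial_group (K : Type*) [Field K] [LinearOrder K] [IsStrictOrderedRing K]
    (hsq : ∀ x : K, 0 < x → ∃ y : K, y ^ 2 = x)
    (hodd : ∀ p : Polynomial K, Odd p.natDegree → ∃ x : K, p.eval x = 0) :
    ∃ M : Set K, (∀ m ∈ M, (0 : K) < m) ∧ (1 : K) ∈ M ∧
      (∀ m ∈ M, ∀ m' ∈ M, m * m' ∈ M) ∧ (∀ m ∈ M, m⁻¹ ∈ M) ∧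
      (∀ f : K, f ≠ 0 → ∃! m, m ∈ M ∧ Asymp f m) := by
  let _ : RootableBy {x : K // 0 < x} ℕ :=
    rootableByOfPowLeftSurj _ _ (surjective_pow_pos hsq hodd)
  obtain ⟨M, hM⟩ := (posMk K).ker.exists_isComplement'_of_rootableBy
  refine ⟨Subtype.val '' (M : Set {x : K // 0 < x}), ?_, ⟨1, M.one_mem, rfl⟩, ?_, ?_, ?_⟩
  · rintro _ ⟨m, -, rfl⟩
    exact m.2
  · rintro _ ⟨m, hm, rfl⟩ _ ⟨m', hm', rfl⟩
    exact ⟨m * m', M.mul_mem hm hm', rfl⟩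
  · rintro _ ⟨m, hm, rfl⟩
    exact ⟨m⁻¹, M.inv_mem hm, rfl⟩
  intro f hf
  let g : {x : K // 0 < x} := ⟨|f|, abs_pos.2 hf⟩
  have asymp_iff (m : {x : K // 0 < x}) : Asymp f m ↔ posMk K g = posMk K m := by
    simp [g, asymp_iff_mk_eq]
  obtain ⟨m, hfm, huniq⟩ := (posMk K).existsUnique_eq_map_of_isComplement' hM.symm g
  refine ⟨m, ⟨⟨m, m.2, rfl⟩, (asymp_iff m).2 hfm⟩, ?_⟩
  rintro _ ⟨⟨x, hxM, rfl⟩, hfx⟩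
  exact congrArg (fun y : M ↦ ((y : {x : K // 0 < x}) : K))
    (huniq ⟨x, hxM⟩ ((asymp_iff x).1 hfx))
end

section
/- If x is an element of an ordered field with exponential E (an ordered group isomorphism (K,+,<) ≅ (K^{>0},·,<)) satisfying E(y) ≥ y + 1 for all y, then for every x greater than all natural numbers and every n ∈ ℕ, E(x) > xⁿ. -/
/-!
Write `m = n + 1`. Additivity gives `E x = E (x / m) ^ m ≥ (x / m + 1) ^ m > (x / m) ^ m`, and
`(x / m) ^ m = x ^ n * (x / m ^ m) > x ^ n` because `x` exceeds the natural number `m ^ m`.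
-/

theorem pow_succ_apply_of_map_add {M N : Type*} [AddMonoid M] [Monoid N] (f : M → N)
    (hf : ∀ x y, f (x + y) = f x * f y) (x : M) (n : ℕ) :
    f ((n + 1) • x) = f x ^ (n + 1) := by
  induction n with
  | zero => simp
  | succ n ih => rw [succ_nsmul, hf, ih, ← pow_succ]

section OrderedField

variable {K : Type*} [Field K] [LinearOrder K] [IsStrictOrderedRing K]

theorem pow_lt_div_pow_of_pow_lt {x : K} (n : ℕ) (hx : ((n + 1 : ℕ) : K) ^ (n + 1) < x) :
    x ^ n < (x / (n + 1 : ℕ)) ^ (n + 1) := by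
  have hx0 : 0 < x := lt_trans (by positivity) hx
  rw [div_pow, lt_div_iff₀ (by positivity)]
  calc x ^ n * ((n + 1 : ℕ) : K) ^ (n + 1) < x ^ n * x := by gcongr
    _ = x ^ (n + 1) := (pow_succ x n).symm

theorem pow_lt_div_add_one_pow_of_pow_lt {x : K} (n : ℕ)
    (hx : ((n + 1 : ℕ) : K) ^ (n + 1) < x) :
    x ^ n < (x / (n + 1 : ℕ) + 1) ^ (n + 1) := by
  have hq : 0 ≤ x / (n + 1 : ℕ) := div_nonneg (lt_trans (by positivity) hx).le (by positivity)
  calc x ^ n < (x / (n + 1 : ℕ)) ^ (n + 1) := pow_lt_div_pow_of_pow_lt n hx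
    _ < (x / (n + 1 : ℕ) + 1) ^ (n + 1) := by gcongr; linarith

end OrderedField

theorem exp_gt_pow_of_add_one_le_general {K : Type*} [Field K] [LinearOrder K] [IsStrictOrderedRing K] (E : K → K)
    (hadd : ∀ x y : K, E (x + y) = E x * E y)
    (hge : ∀ y : K, y + 1 ≤ E y) :
    ∀ x : K, (∀ n : ℕ, (n : K) < x) → ∀ n : ℕ, x ^ n < E x := by
  intro x hx n
  have hlarge : ((n + 1 : ℕ) : K) ^ (n + 1) < x := by exact_mod_cast hx ((n + 1) ^ (n + 1))
  have hsplit : E x = E (x / (n + 1 : ℕ)) ^ (n + 1) := by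
    rw [← pow_succ_apply_of_map_add E hadd, nsmul_eq_mul, mul_div_cancel₀ _ (by positivity)]
  have hx0 : 0 < x := lt_trans (by positivity) hlarge
  calc x ^ n < (x / (n + 1 : ℕ) + 1) ^ (n + 1) := pow_lt_div_add_one_pow_of_pow_lt n hlarge
    _ ≤ E (x / (n + 1 : ℕ)) ^ (n + 1) := by gcongr; exact hge _
    _ = E x := hsplit.symm

/-- If `E` is a strictly increasing homomorphism from `(K,+)` to `(K^{>0},·)` with
`E y ≥ y + 1` for all `y`, then `E x > xⁿ` for every `x` greater than all natural
numbers and every `n : ℕ`. -/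
theorem exp_gt_pow_of_add_one_le {K : Type*} [Field K] [LinearOrder K] [IsStrictOrderedRing K] (E : K → K)
    (hpos : ∀ x : K, 0 < E x)
    (hadd : ∀ x y : K, E (x + y) = E x * E y)
    (hmono : StrictMono E)
    (hge : ∀ y : K, y + 1 ≤ E y) :
    ∀ x : K, (∀ n : ℕ, (n : K) < x) → ∀ n : ℕ, x ^ n < E x :=
  exp_gt_pow_of_add_one_le_general E hadd hge
end
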